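/- Let S and V be finite-dimensional real vector spaces, F a skew-symmetric bilinear form on S, π_v : V* → V and π_S : S* → S skew linear maps. Set T := S ⊕ V, identify T* = S* ⊕ V*, and let D' := {((π_S(β), −π_v(α)), (β + ι_{π_S(β)} F, α)) : β ∈ S*, α ∈ V*} ⊆ T ⊕ T*. Define B : S* → S* by B(β) := ι_{π_S(β)} F. Then D' ∩ (T ⊕ 0) = 0 if and only if Id + B : S* → S* is invertible, and in that case D' = {((γ(λ), −π_v(α)), (λ, α)) : λ ∈ S*, α ∈ V*}, where γ := π_S ∘ (Id + B)⁻¹ : S* → S. -/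
import Mathlib


/-- The Lagrangian subspace
`D' := {((π_S(β), −π_v(α)), (β + ι_{π_S(β)}F, α)) : β ∈ S*, α ∈ V*}` arising from a
coupling Dirac structure with curvature form `F`, vertical Poisson structure `π_v`
and base Poisson structure `π_S`. -/
def modelD' {S V : Type*} [AddCommGroup S] [Module ℝ S] [AddCommGroup V] [Module ℝ V]
    (F : S →ₗ[ℝ] S →ₗ[ℝ] ℝ) (πv : Module.Dual ℝ V →ₗ[ℝ] V)
    (πS : Module.Dual ℝ S →ₗ[ℝ] S) :
    Set ((S × V) × (Module.Dual ℝ S × Module.Dual ℝ V)) :=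
  {x | ∃ (β : Module.Dual ℝ S) (α : Module.Dual ℝ V),
    x = ((πS β, -πv α), (β + F (πS β), α))}

/-- With `B : S* → S*`, `B(β) := ι_{π_S(β)}F`, the subspace `D'` satisfies
`D' ∩ (T ⊕ 0) = 0` if and only if `Id + B` is invertible, and in that case
`D' = {((γ(λ), −π_v(α)), (λ, α))}` with `γ := π_S ∘ (Id + B)⁻¹`. -/
theorem quotient_poisson_structure
    {S V : Type*} [AddCommGroup S] [Module ℝ S] [FiniteDimensional ℝ S]
    [AddCommGroup V] [Module ℝ V] [FiniteDimensional ℝ V]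
    (F : S →ₗ[ℝ] S →ₗ[ℝ] ℝ) (hF : ∀ s s' : S, F s s' = - F s' s)
    (πv : Module.Dual ℝ V →ₗ[ℝ] V)
    (hπv : ∀ α β : Module.Dual ℝ V, β (πv α) = - α (πv β))
    (πS : Module.Dual ℝ S →ₗ[ℝ] S)
    (hπS : ∀ α β : Module.Dual ℝ S, β (πS α) = - α (πS β))
    (B : Module.Dual ℝ S →ₗ[ℝ] Module.Dual ℝ S)
    (hB : ∀ β : Module.Dual ℝ S, B β = F (πS β)) :
    ((∀ x ∈ modelD' F πv πS, x.2 = 0 → x = 0) ↔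
        Function.Bijective
          ((LinearMap.id : Module.Dual ℝ S →ₗ[ℝ] Module.Dual ℝ S) + B)) ∧
    (∀ Binv : Module.Dual ℝ S →ₗ[ℝ] Module.Dual ℝ S,
      ((LinearMap.id + B) ∘ₗ Binv = LinearMap.id ∧
        Binv ∘ₗ (LinearMap.id + B) = LinearMap.id) →
      modelD' F πv πS
        = {x : (S × V) × (Module.Dual ℝ S × Module.Dual ℝ V) |
            ∃ (lamb : Module.Dual ℝ S) (α : Module.Dual ℝ V),
              x = ((πS (Binv lamb), -πv α), (lamb, α))}) := by
  constructor
  · constructor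
    · intro h
      have hinj : Function.Injective
          ((LinearMap.id : Module.Dual ℝ S →ₗ[ℝ] Module.Dual ℝ S) + B) := by
        rw [← LinearMap.ker_eq_bot, LinearMap.ker_eq_bot']
        intro β hβ
        have hβ' : β + B β = 0 := by simpa [LinearMap.add_apply] using hβ
        have hβF : β + F (πS β) = 0 := by rw [← hB]; exact hβ'
        have hx := h ((πS β, -πv 0), (β + F (πS β), 0)) ⟨β, 0, rfl⟩
          (by simp [hβF])
        have h1 : πS β = 0 := congrArg (fun y => y.1.1) hx
        have h2 : B β = 0 := by rw [hB, h1, map_zero]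
        have : β = 0 := by rw [h2, add_zero] at hβ'; exact hβ'
        exact this
      exact ⟨hinj, (LinearMap.injective_iff_surjective).mp hinj⟩
    · rintro ⟨hinj, -⟩ x hx hx2
      obtain ⟨β, α, rfl⟩ := hx
      have hα : α = 0 := congrArg Prod.snd hx2
      have hβF : β + F (πS β) = 0 := congrArg Prod.fst hx2
      have hβ0 : β = 0 := by
        have : ((LinearMap.id : Module.Dual ℝ S →ₗ[ℝ] Module.Dual ℝ S) + B) β
            = ((LinearMap.id : Module.Dual ℝ S →ₗ[ℝ] Module.Dual ℝ S) + B) 0 := by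
          simp [LinearMap.add_apply, hB, hβF]
        exact hinj this
      simp [hβ0, hα, Prod.ext_iff]
  · rintro Binv ⟨h1, h2⟩
    have h1' : ∀ lamb, Binv lamb + B (Binv lamb) = lamb := fun lamb => by
      have := congrArg (fun f => f lamb) h1
      simpa [LinearMap.comp_apply, LinearMap.add_apply] using this
    have h2' : ∀ β, Binv (β + B β) = β := fun β => by
      have := congrArg (fun f => f β) h2
      simpa [LinearMap.comp_apply, LinearMap.add_apply] using this
    ext x
    constructor
    · rintro ⟨β, α, rfl⟩
      refine ⟨β + B β, α, ?_⟩
      rw [h2', hB]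
    · rintro ⟨lamb, α, rfl⟩
      refine ⟨Binv lamb, α, ?_⟩
      rw [← hB, h1']
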